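/- Let U == V be a word equation over the alphabet ℕ whose constant letters are c1,…,ck and whose sequence variables are α1,…,αk', and let d1,…,dk' be pairwise distinct elements of ℕ ∖ {c1,…,ck}. Then U == V has a solution assigning to each αi a word in ℕ* if and only if it has a solution assigning to each αi a word over the finite alphabet {c1,…,ck, d1,…,dk'}. -/
import Mathlib


/-! A word equation over the infinite alphabet `ℕ` has a solution iff it has
a solution over the finite alphabet consisting of its own constant letters
together with one fresh distinct letter for each of its sequence
variables. -/

/-- Word-equation terms over the alphabet `ℕ` (constant letters) and sequence
variables indexed by `ℕ`. -/
inductive WTerm : Type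
  | letter : ℕ → WTerm
  | svar : ℕ → WTerm
  | conc : WTerm → WTerm → WTerm

def WTerm.eval (s : ℕ → List ℕ) : WTerm → List ℕ
  | .letter c => [c]
  | .svar a => s a
  | .conc t₁ t₂ => t₁.eval s ++ t₂.eval s

/-- The constant letters occurring in a term. -/
def WTerm.letters : WTerm → Finset ℕ
  | .letter c => {c}
  | .svar _ => ∅
  | .conc t₁ t₂ => t₁.letters ∪ t₂.letters

/-- The sequence variables occurring in a term. -/
def WTerm.vars : WTerm → Finset ℕ
  | .letter _ => ∅
  | .svar a => {a}
  | .conc t₁ t₂ => t₁.vars ∪ t₂.vars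


lemma WTerm.eval_map (f : ℕ → ℕ) (s : ℕ → List ℕ) (t : WTerm)
    (hf : ∀ c ∈ t.letters, f c = c) :
    t.eval (fun a => (s a).map f) = (t.eval s).map f := by
  induction t with
  | letter c => simp [WTerm.eval, hf c (by simp [WTerm.letters])]
  | svar a => rfl
  | conc t₁ t₂ ih₁ ih₂ =>
      simp only [WTerm.eval, List.map_append]
      rw [ih₁ (fun c hc => hf c (by simp [WTerm.letters, hc])),
          ih₂ (fun c hc => hf c (by simp [WTerm.letters, hc]))]

theorem word_equation_solution_over_finite_alphabet
    (U V : WTerm) (d : ℕ → ℕ)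
    (hdinj : Set.InjOn d ↑(U.vars ∪ V.vars))
    (hdfresh : ∀ a ∈ U.vars ∪ V.vars, d a ∉ U.letters ∪ V.letters) :
    (∃ s : ℕ → List ℕ, U.eval s = V.eval s) ↔
      ∃ s : ℕ → List ℕ,
        (∀ a ∈ U.vars ∪ V.vars, ∀ c ∈ s a,
          c ∈ U.letters ∪ V.letters ∨ ∃ b ∈ U.vars ∪ V.vars, c = d b) ∧
        U.eval s = V.eval s := by
  constructor
  · rintro ⟨s, hs⟩
    by_cases h : (U.vars ∪ V.vars).Nonempty
    · obtain ⟨b₀, hb₀⟩ := h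
      set f : ℕ → ℕ := fun c => if c ∈ U.letters ∪ V.letters then c else d b₀ with hfdef
      refine ⟨fun a => (s a).map f, ?_, ?_⟩
      · intro a _ c hc
        obtain ⟨c', _, rfl⟩ := List.mem_map.1 hc
        by_cases hmem : c' ∈ U.letters ∪ V.letters
        · left; simpa only [hfdef, if_pos hmem] using hmem
        · right; exact ⟨b₀, hb₀, by simp only [hfdef, if_neg hmem]⟩
      · have hfU : ∀ c ∈ U.letters, f c = c := fun c hc =>
          if_pos (Finset.mem_union.2 (Or.inl hc))
        have hfV : ∀ c ∈ V.letters, f c = c := fun c hc =>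
          if_pos (Finset.mem_union.2 (Or.inr hc))
        rw [WTerm.eval_map f s U hfU, WTerm.eval_map f s V hfV, hs]
    · exact ⟨s, fun a ha => absurd ⟨a, ha⟩ h, hs⟩
  · rintro ⟨s, -, hs⟩
    exact ⟨s, hs⟩
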